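/- Under the null hypothesis of mutual independence of the components of X and the MCAR mechanism, for a fixed index j2 and indices l_1, l_2, l_3, l_4 < j2, the mixed fourth moment E(U_{j2,l_1} U_{j2,l_2} U_{j2,l_3} U_{j2,l_4}) equals 0 whenever the multiset {l_1, l_2, l_3, l_4} has an element appearing an odd number of times (in particular when all four indices are mutually distinct, or when exactly two or exactly three of them coincide). -/

import Mathlib

open MeasureTheory ProbabilityTheory Filter Finset

namespace KendallMissing

/-- Setup: `X i k` is the `k`-th component of the `i`-th observation, `R i k` the
corresponding response (missingness) indicator with `P(R i k = 1) = q k` (MCAR,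
Bernoulli, independent across cells and of the data).  Under the null hypothesis `H₀`
of total (mutual) independence of the components, together with the i.i.d. sampling,
the whole family `{X i k} ∪ {R i k}` is mutually independent, the `X i k` are
identically distributed in `i`, and the marginals are continuous (atomless). -/
structure Setup {Ω : Type*} [MeasurableSpace Ω] (μ : Measure Ω)
    (X R : ℕ → ℕ → Ω → ℝ) (q : ℕ → ℝ) : Prop where
  isProb : IsProbabilityMeasure μ
  measX : ∀ i k, Measurable (X i k)
  measR : ∀ i k, Measurable (R i k)
  indep : iIndepFun (β := fun _ : (ℕ × ℕ) × Bool => ℝ)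
      (fun p => if p.2 then R p.1.1 p.1.2 else X p.1.1 p.1.2) μ
  identX : ∀ i k, μ.map (X i k) = μ.map (X 0 k)
  contX : ∀ i k (x : ℝ), μ {ω | X i k ω = x} = 0
  Rval : ∀ i k ω, R i k ω = 0 ∨ R i k ω = 1
  Rq : ∀ i k, μ {ω | R i k ω = 1} = ENNReal.ofReal (q k)
  q_nonneg : ∀ k, 0 ≤ q k
  q_le_one : ∀ k, q k ≤ 1

variable {Ω : Type*} [MeasurableSpace Ω]

/-- Expectation of a real random variable. -/
noncomputable def mean (μ : Measure Ω) (f : Ω → ℝ) : ℝ := ∫ ω, f ω ∂μ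

/-- Variance of a real random variable. -/
noncomputable def var (μ : Measure Ω) (f : Ω → ℝ) : ℝ :=
  ∫ ω, (f ω - mean μ f) ^ 2 ∂μ

/-- Covariance of two real random variables. -/
noncomputable def cov (μ : Measure Ω) (f g : Ω → ℝ) : ℝ :=
  ∫ ω, (f ω - mean μ f) * (g ω - mean μ g) ∂μ

/-- Completeness indicator `S i = ∏_{k<d} R i k` of the `i`-th observation. -/
noncomputable def Scomp (R : ℕ → ℕ → Ω → ℝ) (d i : ℕ) (ω : Ω) : ℝ :=
  ∏ k ∈ range d, R i k ω

/-- Complete-case Kendall tau `τ_kl^cc`. -/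
noncomputable def tauCC (X R : ℕ → ℕ → Ω → ℝ) (n d k l : ℕ) (ω : Ω) : ℝ :=
  2 / ((n : ℝ) * ((n : ℝ) - 1)) *
    ∑ i ∈ range n, ∑ j ∈ range i,
      Real.sign (X i k ω - X j k ω) * Real.sign (X i l ω - X j l ω) *
        (Scomp R d i ω * Scomp R d j ω)

/-- Complete-case test statistic `T_nd^cc = Σ_{l<k<d} (τ_kl^cc)²`. -/
noncomputable def TCC (X R : ℕ → ℕ → Ω → ℝ) (n d : ℕ) (ω : Ω) : ℝ :=
  ∑ k ∈ range d, ∑ l ∈ range k, (tauCC X R n d k l ω) ^ 2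

/-- Pairwise (cell-wise) Kendall tau `τ̃_kl`. -/
noncomputable def tauP (X R : ℕ → ℕ → Ω → ℝ) (n k l : ℕ) (ω : Ω) : ℝ :=
  2 / ((n : ℝ) * ((n : ℝ) - 1)) *
    ∑ i ∈ range n, ∑ j ∈ range i,
      Real.sign (X i k ω - X j k ω) * Real.sign (X i l ω - X j l ω) *
        (R i k ω * R j k ω * R i l ω * R j l ω)

/-- Pairwise test statistic `T̃_nd = Σ_{l<k<d} τ̃_kl²`. -/
noncomputable def Ttilde (X R : ℕ → ℕ → Ω → ℝ) (n d : ℕ) (ω : Ω) : ℝ :=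
  ∑ k ∈ range d, ∑ l ∈ range k, (tauP X R n k l ω) ^ 2

/-- The kernel `f_k(i,j) = sgn(X_ik - X_jk) R_ik R_jk`. -/
noncomputable def fker (X R : ℕ → ℕ → Ω → ℝ) (k i j : ℕ) (ω : Ω) : ℝ :=
  Real.sign (X i k ω - X j k ω) * (R i k ω * R j k ω)

/-- The `U`-statistic
`U_kl = (n(n-1)(n-2)(n-3))⁻¹ Σ_{i₁≠i₂≠i₃≠i₄} f_k(i₁,i₂) f_l(i₁,i₂) f_k(i₃,i₄) f_l(i₃,i₄)`,
the sum being over quadruples of pairwise distinct indices. -/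
noncomputable def Ustat (X R : ℕ → ℕ → Ω → ℝ) (n k l : ℕ) (ω : Ω) : ℝ :=
  (1 / ((n : ℝ) * ((n : ℝ) - 1) * ((n : ℝ) - 2) * ((n : ℝ) - 3))) *
    ∑ i1 ∈ range n, ∑ i2 ∈ range n, ∑ i3 ∈ range n, ∑ i4 ∈ range n,
      if i1 ≠ i2 ∧ i1 ≠ i3 ∧ i1 ≠ i4 ∧ i2 ≠ i3 ∧ i2 ≠ i4 ∧ i3 ≠ i4 then
        fker X R k i1 i2 ω * fker X R l i1 i2 ω * fker X R k i3 i4 ω * fker X R l i3 i4 ω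
      else 0

/-- The `U`-statistic based test statistic `T̂_nd = Σ_{l<k<d} U_kl`. -/
noncomputable def That (X R : ℕ → ℕ → Ω → ℝ) (n d : ℕ) (ω : Ω) : ℝ :=
  ∑ k ∈ range d, ∑ l ∈ range k, Ustat X R n k l ω

/-- The martingale-difference summands `Y_{n,k} = (2/√Var(T̂_nd)) Σ_{l<k} U_kl`. -/
noncomputable def Y (μ : Measure Ω) (X R : ℕ → ℕ → Ω → ℝ) (n d k : ℕ) (ω : Ω) : ℝ :=
  (2 / Real.sqrt (var μ (That X R n d))) * ∑ l ∈ range k, Ustat X R n k l ω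

/-- The σ-field `F_{m,t} = σ{(X i j, R i j) : i < m, j < t}` (0-indexed). -/
def Fsig (X R : ℕ → ℕ → Ω → ℝ) (m t : ℕ) : MeasurableSpace Ω :=
  ⨆ i ∈ Finset.range m, ⨆ j ∈ Finset.range t,
    (MeasurableSpace.comap (X i j) inferInstance ⊔ MeasurableSpace.comap (R i j) inferInstance)

end KendallMissing

/-!
Expand the product of the four `U`-statistics into monomials, each a product of four kernels
`f_{j₂}(i₁,i₂) f_{l}(i₁,i₂) f_{j₂}(i₃,i₄) f_{l}(i₃,i₄)` over quadruples of distinct indices.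
Let `c = l i₀` be a column index occurring exactly once among the `l i` (it exists because some
multiplicity is odd). In every monomial the `i₀`-th kernel contributes the factor
`sgn(X_{a c} - X_{b c})` for its first pair `(a, b)`, and no other factor involves `X_{a c}` or
`X_{b c}`: the other kernels live in the columns `j₂` and `l j ≠ c`, and the remaining
column-`c` factor involves the rows `i₃, i₄ ∉ {a, b}`. By independence the expectation of the
monomial factors through `E sgn(X_{a c} - X_{b c})`, which vanishes because `X_{a c}` and
`X_{b c}` are i.i.d.
-/

lemma Real.measurable_sign : Measurable Real.sign :=
  measurable_const.ite measurableSet_Iio (measurable_const.ite measurableSet_Ioi measurable_const)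

lemma Real.abs_sign_le_one (x : ℝ) : |Real.sign x| ≤ 1 := by
  rcases Real.sign_apply_eq x with h | h | h <;> simp [h]

/-- An odd fibre has size `1` or `3`; in the second case the remaining index is alone in its
fibre. -/
lemma Fin.exists_fiber_eq_singleton_of_odd {α : Type*} [DecidableEq α] (l : Fin 4 → α)
    (hodd : ∃ i : Fin 4, Odd ((Finset.univ.filter fun j : Fin 4 => l j = l i).card)) :
    ∃ i : Fin 4, ∀ j, l j = l i → j = i := by
  obtain ⟨i, hi⟩ := hodd
  set A := Finset.univ.filter fun j : Fin 4 => l j = l i with hA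
  have hcard : A.card = 1 ∨ A.card = 3 := by
    have := A.card_le_univ
    simp only [Fintype.card_fin] at this
    obtain ⟨m, hm⟩ := hi
    omega
  rcases hcard with hcard | hcard
  · exact ⟨i, fun j hj => Finset.card_le_one.1 hcard.le j (by simp [hA, hj]) i (by simp [hA])⟩
  · obtain ⟨x, hx⟩ := Finset.card_eq_one.1 (by rw [Finset.card_compl, hcard]; rfl : Aᶜ.card = 1)
    have hxA : x ∉ A := Finset.mem_compl.1 (hx ▸ Finset.mem_singleton_self x)
    refine ⟨x, fun j hj => ?_⟩
    have hjA : j ∉ A := fun hjA => hxA (by simp_all)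
    simpa [hx] using Finset.mem_compl.2 hjA

namespace ProbabilityTheory

variable {Ω ι : Type*} {mΩ : MeasurableSpace Ω} {μ : Measure Ω}

lemma integral_sign_sub_eq_zero [IsFiniteMeasure μ] {f g : Ω → ℝ} (hf : Measurable f)
    (hg : Measurable g) (hfg : IndepFun f g μ) (hfg_map : μ.map f = μ.map g) :
    ∫ ω, Real.sign (f ω - g ω) ∂μ = 0 := by
  have hφ : Measurable fun p : ℝ × ℝ => Real.sign (p.1 - p.2) :=
    Real.measurable_sign.comp (measurable_fst.sub measurable_snd)
  have hswap : μ.map (fun ω => (f ω, g ω)) = μ.map (fun ω => (g ω, f ω)) := by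
    rw [(indepFun_iff_map_prod_eq_prod_map_map hf.aemeasurable hg.aemeasurable).1 hfg,
      (indepFun_iff_map_prod_eq_prod_map_map hg.aemeasurable hf.aemeasurable).1 hfg.symm,
      hfg_map]
  have h := congrArg (fun ν => ∫ p, Real.sign (p.1 - p.2) ∂ν) hswap
  simp only [integral_map (hf.prodMk hg).aemeasurable hφ.aestronglyMeasurable,
    integral_map (hg.prodMk hf).aemeasurable hφ.aestronglyMeasurable] at h
  simp only [← neg_sub (f _), Real.sign_neg, integral_neg] at h
  linarith

/-- Everything measurable with respect to the coordinates other than `i` and `j` is independent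
of `sgn(Z i - Z j)`. -/
lemma integral_sign_sub_mul_eq_zero [IsProbabilityMeasure μ] {Z : ι → Ω → ℝ}
    (hZ : ∀ i, Measurable (Z i)) (hindep : iIndepFun Z μ) {i j : ι} (hij : i ≠ j)
    (hZ_map : μ.map (Z i) = μ.map (Z j)) {H : Ω → ℝ}
    (hH : Measurable[⨆ k ∈ ({i, j} : Set ι)ᶜ, MeasurableSpace.comap (Z k) inferInstance] H) :
    ∫ ω, Real.sign (Z i ω - Z j ω) * H ω ∂μ = 0 := by
  have hle : ∀ k, MeasurableSpace.comap (Z k) inferInstance ≤ mΩ := fun k => (hZ k).comap_le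
  have hsign : Measurable[⨆ k ∈ ({i, j} : Set ι), MeasurableSpace.comap (Z k) inferInstance]
      fun ω => Real.sign (Z i ω - Z j ω) := by
    refine Real.measurable_sign.comp (Measurable.sub ?_ ?_) <;>
      exact (comap_measurable _).mono (le_iSup₂ (f := fun k (_ : k ∈ ({i, j} : Set ι)) =>
        MeasurableSpace.comap (Z k) inferInstance) _ (by simp)) le_rfl
  have hindep_sign : IndepFun (fun ω => Real.sign (Z i ω - Z j ω)) H μ :=
    (IndepFun_iff_Indep _ _ _).2 <| indep_of_indep_of_le_left
      (indep_of_indep_of_le_right (indep_biSup_compl hle hindep.iIndep _) hH.comap_le)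
      hsign.comap_le
  rw [hindep_sign.integral_fun_mul_eq_mul_integral
      (Real.measurable_sign.comp ((hZ i).sub (hZ j))).aestronglyMeasurable
      (hH.mono (iSup₂_le fun k _ => hle k) le_rfl).aestronglyMeasurable,
    integral_sign_sub_eq_zero (hZ i) (hZ j) (hindep.indepFun hij) hZ_map, zero_mul]

end ProbabilityTheory

namespace KendallMissing

section Model

variable {Ω : Type*} {X R : ℕ → ℕ → Ω → ℝ}

/-- The family of all cells, indexed by `((row, column), isResponse)`, as in `Setup.indep`. -/
def cell (X R : ℕ → ℕ → Ω → ℝ) (p : (ℕ × ℕ) × Bool) : Ω → ℝ :=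
  if p.2 then R p.1.1 p.1.2 else X p.1.1 p.1.2

/-- The σ-algebra generated by all cells except the observations `X a c` and `X b c`. -/
abbrev offPair (X R : ℕ → ℕ → Ω → ℝ) (a b c : ℕ) : MeasurableSpace Ω :=
  ⨆ p ∈ ({((a, c), false), ((b, c), false)} : Set ((ℕ × ℕ) × Bool))ᶜ,
    MeasurableSpace.comap (cell X R p) inferInstance

lemma measurable_offPair_cell {a b c : ℕ} {p : (ℕ × ℕ) × Bool}
    (hp : p ∉ ({((a, c), false), ((b, c), false)} : Set ((ℕ × ℕ) × Bool))) :
    Measurable[offPair X R a b c] (cell X R p) :=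
  (comap_measurable _).mono (le_iSup₂ (f := fun p (_ : p ∈ _ᶜ) =>
    MeasurableSpace.comap (cell X R p) inferInstance) p hp) le_rfl

lemma measurable_offPair_R (a b c i k : ℕ) : Measurable[offPair X R a b c] (R i k) :=
  measurable_offPair_cell (p := ((i, k), true)) (by simp)

lemma measurable_offPair_X {a b c i k : ℕ} (ha : (i, k) ≠ (a, c)) (hb : (i, k) ≠ (b, c)) :
    Measurable[offPair X R a b c] (X i k) :=
  measurable_offPair_cell (p := ((i, k), false)) (by simp [ha, hb])

lemma measurable_fker {m : MeasurableSpace Ω} {k i j : ℕ} (hXi : Measurable[m] (X i k))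
    (hXj : Measurable[m] (X j k)) (hRi : Measurable[m] (R i k)) (hRj : Measurable[m] (R j k)) :
    Measurable[m] (fker X R k i j) :=
  (Real.measurable_sign.comp (hXi.sub hXj)).mul (hRi.mul hRj)

lemma measurable_offPair_fker_of_ne {a b c k : ℕ} (hk : k ≠ c) (i j : ℕ) :
    Measurable[offPair X R a b c] (fker X R k i j) :=
  measurable_fker (measurable_offPair_X (by simp [hk]) (by simp [hk]))
    (measurable_offPair_X (by simp [hk]) (by simp [hk]))
    (measurable_offPair_R ..) (measurable_offPair_R ..)

lemma measurable_offPair_fker {a b c i j : ℕ} (hia : i ≠ a) (hib : i ≠ b) (hja : j ≠ a)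
    (hjb : j ≠ b) (k : ℕ) : Measurable[offPair X R a b c] (fker X R k i j) :=
  measurable_fker (measurable_offPair_X (by simp [hia]) (by simp [hib]))
    (measurable_offPair_X (by simp [hja]) (by simp [hjb]))
    (measurable_offPair_R ..) (measurable_offPair_R ..)

/-- The summand `f_k(i₁,i₂) f_l(i₁,i₂) f_k(i₃,i₄) f_l(i₃,i₄)` of `Ustat X R n k l`. -/
noncomputable def quadKernel (X R : ℕ → ℕ → Ω → ℝ) (k l : ℕ) (p : ℕ × ℕ × ℕ × ℕ) (ω : Ω) : ℝ :=
  fker X R k p.1 p.2.1 ω * fker X R l p.1 p.2.1 ω *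
    fker X R k p.2.2.1 p.2.2.2 ω * fker X R l p.2.2.1 p.2.2.2 ω

def distinctQuads (n : ℕ) : Finset (ℕ × ℕ × ℕ × ℕ) :=
  (range n ×ˢ range n ×ˢ range n ×ˢ range n).filter fun p =>
    p.1 ≠ p.2.1 ∧ p.1 ≠ p.2.2.1 ∧ p.1 ≠ p.2.2.2 ∧
      p.2.1 ≠ p.2.2.1 ∧ p.2.1 ≠ p.2.2.2 ∧ p.2.2.1 ≠ p.2.2.2

lemma measurable_quadKernel {m : MeasurableSpace Ω} {k l : ℕ} {p : ℕ × ℕ × ℕ × ℕ}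
    (hk : ∀ i j, Measurable[m] (fker X R k i j)) (hl : ∀ i j, Measurable[m] (fker X R l i j)) :
    Measurable[m] (quadKernel X R k l p) :=
  (((hk _ _).mul (hl _ _)).mul (hk _ _)).mul (hl _ _)

lemma ustat_eq_sum_quadKernel (n k l : ℕ) (ω : Ω) :
    Ustat X R n k l ω = 1 / ((n : ℝ) * ((n : ℝ) - 1) * ((n : ℝ) - 2) * ((n : ℝ) - 3)) *
      ∑ p ∈ distinctQuads n, quadKernel X R k l p ω := by
  simp [Ustat, distinctQuads, quadKernel, Finset.sum_filter, Finset.sum_product]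

lemma prod_ustat_eq_sum_prod_quadKernel {ι : Type*} [Fintype ι] [DecidableEq ι] (n k : ℕ)
    (l : ι → ℕ) (ω : Ω) :
    ∏ j, Ustat X R n k (l j) ω =
      (1 / ((n : ℝ) * ((n : ℝ) - 1) * ((n : ℝ) - 2) * ((n : ℝ) - 3))) ^ Fintype.card ι *
        ∑ g ∈ Fintype.piFinset fun _ => distinctQuads n,
          ∏ j, quadKernel X R k (l j) (g j) ω := by
  simp only [ustat_eq_sum_quadKernel, Finset.prod_mul_distrib, Finset.prod_const,
    Finset.card_univ, Finset.prod_univ_sum]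

lemma quadKernel_eq_sign_mul (k c a b a' b' : ℕ) (ω : Ω) :
    quadKernel X R k c (a, b, a', b') ω = Real.sign (X a c ω - X b c ω) *
      (fker X R k a b ω * (R a c ω * R b c ω) * fker X R k a' b' ω * fker X R c a' b' ω) := by
  simp only [quadKernel, fker]
  ring

variable [MeasurableSpace Ω] {μ : Measure Ω} {q : ℕ → ℝ}

lemma measurable_cell (hs : Setup μ X R q) (p : (ℕ × ℕ) × Bool) : Measurable (cell X R p) := by
  rcases p with ⟨⟨i, k⟩, _ | _⟩
  exacts [hs.measX i k, hs.measR i k]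

lemma abs_fker_le_one (hs : Setup μ X R q) (k i j : ℕ) (ω : Ω) : |fker X R k i j ω| ≤ 1 := by
  rw [fker, abs_mul]
  refine mul_le_one₀ (Real.abs_sign_le_one _) (abs_nonneg _) ?_
  rcases hs.Rval i k ω with h | h <;> rcases hs.Rval j k ω with h' | h' <;> simp [h, h']

lemma abs_quadKernel_le_one (hs : Setup μ X R q) (k l : ℕ) (p : ℕ × ℕ × ℕ × ℕ) (ω : Ω) :
    |quadKernel X R k l p ω| ≤ 1 := by
  have h := abs_fker_le_one hs
  simp only [quadKernel, abs_mul]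
  exact mul_le_one₀ (mul_le_one₀ (mul_le_one₀ (h ..) (abs_nonneg _) (h ..)) (by positivity)
    (h ..)) (abs_nonneg _) (h ..)

lemma integrable_prod_quadKernel (hs : Setup μ X R q) {ι : Type*} [Fintype ι] (k : ℕ)
    (l : ι → ℕ) (g : ι → ℕ × ℕ × ℕ × ℕ) :
    Integrable (fun ω => ∏ j, quadKernel X R k (l j) (g j) ω) μ := by
  have := hs.isProb
  have hf : ∀ k i j, Measurable (fker X R k i j) := fun k i j =>
    measurable_fker (hs.measX i k) (hs.measX j k) (hs.measR i k) (hs.measR j k)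
  refine Integrable.of_bound (C := 1)
    (Finset.measurable_prod _ fun j _ => measurable_quadKernel (hf _) (hf _)).aestronglyMeasurable
    (ae_of_all _ fun ω => ?_)
  rw [Real.norm_eq_abs, Finset.abs_prod]
  exact Finset.prod_le_one (fun _ _ => abs_nonneg _) fun j _ => abs_quadKernel_le_one hs ..

lemma integral_prod_quadKernel_eq_zero (hs : Setup μ X R q) {ι : Type*} [Fintype ι]
    [DecidableEq ι] {n k : ℕ} {l : ι → ℕ} {i₀ : ι} (hk : k ≠ l i₀)
    (hi₀ : ∀ j, l j = l i₀ → j = i₀) {g : ι → ℕ × ℕ × ℕ × ℕ} (hg : g i₀ ∈ distinctQuads n) :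
    ∫ ω, ∏ j, quadKernel X R k (l j) (g j) ω ∂μ = 0 := by
  have := hs.isProb
  rcases hq : g i₀ with ⟨a, b, a', b'⟩
  rw [hq] at hg
  simp only [distinctQuads, Finset.mem_filter] at hg
  obtain ⟨-, hab, haa', hab', hba', hbb', -⟩ := hg
  set c := l i₀
  set H : Ω → ℝ := fun ω =>
    fker X R k a b ω * (R a c ω * R b c ω) * fker X R k a' b' ω * fker X R c a' b' ω *
      ∏ j ∈ Finset.univ.erase i₀, quadKernel X R k (l j) (g j) ω
  have hsplit : ∀ ω,
      ∏ j, quadKernel X R k (l j) (g j) ω = Real.sign (X a c ω - X b c ω) * H ω := by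
    intro ω
    rw [← Finset.mul_prod_erase _ _ (Finset.mem_univ i₀), hq, quadKernel_eq_sign_mul]
    ring
  have hH : Measurable[offPair X R a b c] H := by
    refine ((((measurable_offPair_fker_of_ne hk a b).mul ((measurable_offPair_R ..).mul
      (measurable_offPair_R ..))).mul (measurable_offPair_fker_of_ne hk a' b')).mul
      (measurable_offPair_fker haa'.symm hba'.symm hab'.symm hbb'.symm c)).mul
      (Finset.measurable_prod _ fun j hj => ?_)
    have hlj : l j ≠ c := fun h => (Finset.mem_erase.1 hj).1 (hi₀ j h)
    exact measurable_quadKernel (measurable_offPair_fker_of_ne hk)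
      (measurable_offPair_fker_of_ne hlj)
  rw [integral_congr_ae (ae_of_all _ hsplit)]
  exact integral_sign_sub_mul_eq_zero (i := ((a, c), false)) (j := ((b, c), false))
    (measurable_cell hs) hs.indep (by simp [hab])
    ((hs.identX a c).trans (hs.identX b c).symm) hH

end Model

/-- Under `H₀` and MCAR, for a fixed index `j₂` and indices
`l 0, l 1, l 2, l 3 < j₂`, the mixed fourth moment
`E(U_{j₂,l 0} U_{j₂,l 1} U_{j₂,l 2} U_{j₂,l 3})` vanishes whenever some element of the
multiset `{l 0, l 1, l 2, l 3}` appears an odd number of times (in particular when all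
four indices are distinct, or when exactly two or exactly three of them coincide). -/
theorem mixed_fourth_moment_vanishes {Ω : Type*} [MeasurableSpace Ω] (μ : Measure Ω)
    (X R : ℕ → ℕ → Ω → ℝ) (q : ℕ → ℝ) (hs : Setup μ X R q)
    (n j2 : ℕ) (l : Fin 4 → ℕ) (hl : ∀ i, l i < j2)
    (hodd : ∃ i : Fin 4, Odd ((Finset.univ.filter fun j : Fin 4 => l j = l i).card)) :
    ∫ ω, Ustat X R n j2 (l 0) ω * Ustat X R n j2 (l 1) ω
        * Ustat X R n j2 (l 2) ω * Ustat X R n j2 (l 3) ω ∂μ = 0 := by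
  obtain ⟨i₀, hi₀⟩ := Fin.exists_fiber_eq_singleton_of_odd l hodd
  have hexpand : ∀ ω, Ustat X R n j2 (l 0) ω * Ustat X R n j2 (l 1) ω
      * Ustat X R n j2 (l 2) ω * Ustat X R n j2 (l 3) ω =
      (1 / ((n : ℝ) * ((n : ℝ) - 1) * ((n : ℝ) - 2) * ((n : ℝ) - 3))) ^ 4 *
        ∑ g ∈ Fintype.piFinset fun _ => distinctQuads n,
          ∏ j, quadKernel X R j2 (l j) (g j) ω := fun ω => by
    rw [← Fin.prod_univ_four fun j => Ustat X R n j2 (l j) ω, prod_ustat_eq_sum_prod_quadKernel,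
      Fintype.card_fin]
  simp only [hexpand]
  rw [integral_const_mul, integral_finsetSum _ fun g _ => integrable_prod_quadKernel hs _ _ _,
    Finset.sum_eq_zero fun g hg => integral_prod_quadKernel_eq_zero hs (hl i₀).ne' hi₀
      (Fintype.mem_piFinset.1 hg i₀), mul_zero]

end KendallMissing
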